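/- arXiv:2312.13185 — 3 statements merged into one kernel-verified Lean document; each statement's English description precedes it below -/
import Mathlib

section
/- For every finite simple graph G on vertex set Fin N and every vertex v, the graph state |G⟩ := (∏_{{i,j} ∈ E(G)} CZ_{i,j}) |+⟩^{⊗N} is a +1 eigenvector of the stabilizer generator K_v := X_v · ∏_{w ∈ N_G(v)} Z_w, i.e. K_v |G⟩ = |G⟩. -/
/-!
Everything in sight is diagonal in the computational basis except `X_v`, which flips bit `v`.
The CZ layer multiplies the basis amplitude of `s` by `(-1)` for every edge with both ends
set, and flipping `s v` toggles exactly the signs of the edges `vw` with `s w = 1`, which is the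
sign `∏_{w ∈ N(v)} (-1)^{s w}` contributed by the `Z_w`. Since all amplitudes of `|+⟩^{⊗N}`
are equal, this sign identity is all that `K_v |G⟩ = |G⟩` amounts to.
-/

open Matrix Complex
open scoped Kronecker Classical

noncomputable section

namespace QCA

/-- Computational-basis index set of an `N`-qubit register. -/
abbrev QIdx (N : ℕ) := Fin N → Fin 2

/-- Operators (matrices) on an `N`-qubit register `(ℂ²)^{⊗N}`. -/
abbrev MatQ (N : ℕ) := Matrix (QIdx N) (QIdx N) ℂ

/-- Pauli X. -/
def Xg : Matrix (Fin 2) (Fin 2) ℂ := !![0, 1; 1, 0]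

/-- Pauli Z. -/
def Zg : Matrix (Fin 2) (Fin 2) ℂ := !![1, 0; 0, -1]

/-- Pauli Y = i·X·Z. -/
def Yg : Matrix (Fin 2) (Fin 2) ℂ := Complex.I • (Xg * Zg)

/-- Hadamard gate. -/
def Hg : Matrix (Fin 2) (Fin 2) ℂ := (Real.sqrt 2 : ℂ)⁻¹ • !![1, 1; 1, -1]

/-- Phase gate S = diag(1, i). -/
def Sg : Matrix (Fin 2) (Fin 2) ℂ := !![1, 0; 0, Complex.I]

/-- √X := H·S·H. -/
def sqrtXg : Matrix (Fin 2) (Fin 2) ℂ := Hg * Sg * Hg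

/-- The ket |+⟩ = (|0⟩+|1⟩)/√2. -/
def ketPlus : Fin 2 → ℂ := fun _ => (Real.sqrt 2 : ℂ)⁻¹

/-- The bra ⟨+|. -/
def braPlus : Fin 2 → ℂ := fun a => star (ketPlus a)

/-- The product state |+⟩^{⊗ι}. -/
def ketPlusAll (ι : Type*) [Fintype ι] : (ι → Fin 2) → ℂ := fun s => ∏ i, ketPlus (s i)

/-- Kronecker product of two vectors. -/
def kronVec {a b : Type*} (v : a → ℂ) (w : b → ℂ) : a × b → ℂ := fun p => v p.1 * w p.2

variable {ι : Type*} [Fintype ι] [DecidableEq ι]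

/-- `op1 P i` acts as the one-qubit operator `P` on qubit `i` and as the identity elsewhere. -/
def op1 (P : Matrix (Fin 2) (Fin 2) ℂ) (i : ι) : Matrix (ι → Fin 2) (ι → Fin 2) ℂ :=
  fun s t => P (s i) (t i) * ∏ j ∈ Finset.univ.erase i, (if s j = t j then (1 : ℂ) else 0)

/-- Controlled-Z gate between qubits `i` and `j` (identity elsewhere). -/
def cz2 (i j : ι) : Matrix (ι → Fin 2) (ι → Fin 2) ℂ :=
  Matrix.diagonal fun s => if s i = 1 ∧ s j = 1 then (-1 : ℂ) else 1

/-- The Z-rotation exp(iθ Z_i) on qubit `i`. -/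
def rotZ (θ : ℝ) (i : ι) : Matrix (ι → Fin 2) (ι → Fin 2) ℂ :=
  NormedSpace.exp (((θ : ℂ) * Complex.I) • op1 Zg i)

/-- The layer ∏_{i=1}^{N} H_i of Hadamards on every site of a ring of `N` qubits. -/
def hadamardLayer (N : ℕ) : MatQ N := (List.ofFn fun i : Fin N => op1 Hg i).prod

/-- The layer ∏_{i=1}^{N} CZ_{i,i+1} of controlled-Z gates on a ring of `N` qubits
(site indices mod `N`; the factors pairwise commute). -/
def czRing (N : ℕ) [NeZero N] : MatQ N := (List.ofFn fun i : Fin N => cz2 i (i + 1)).prod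

/-- The layer ∏_{i=1}^{N} (√X)_i on a ring of `N` qubits. -/
def sqrtXLayer (N : ℕ) : MatQ N := (List.ofFn fun i : Fin N => op1 sqrtXg i).prod

/-- The cluster CQCA T_c = (∏ H_i)·(∏ CZ_{i,i+1}) on a ring of `N` qubits. -/
def Tc (N : ℕ) [NeZero N] : MatQ N := hadamardLayer N * czRing N

/-- The periodic CQCA T̃_c = ∏ CZ_{i,i+1} on a ring of `N` qubits. -/
def Ttc (N : ℕ) [NeZero N] : MatQ N := czRing N

/-- The fractal CQCA T̂_c = (∏ H_i)·(∏ CZ_{i,i+1})·(∏ (√X)_i) on a ring of `N` qubits. -/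
def Thc (N : ℕ) [NeZero N] : MatQ N := hadamardLayer N * czRing N * sqrtXLayer N

/-- Controlled-Z between input qubit `i` and output qubit `i` on a doubled register. -/
def czIO {N : ℕ} (i : Fin N) : Matrix (QIdx N × QIdx N) (QIdx N × QIdx N) ℂ :=
  Matrix.diagonal fun p => if p.1 i = 1 ∧ p.2 i = 1 then (-1 : ℂ) else 1

/-- The unitary U_T = (1 ⊗ T)·(∏_i H_i^{(out)})·(∏_i CZ_{i,i}^{(in,out)}) of Eq. (16). -/
def UT {N : ℕ} (T : MatQ N) : Matrix (QIdx N × QIdx N) (QIdx N × QIdx N) ℂ :=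
  ((1 : MatQ N) ⊗ₖ T) *
    (List.ofFn fun i : Fin N => (1 : MatQ N) ⊗ₖ op1 Hg i).prod *
    (List.ofFn fun i : Fin N => czIO i).prod

/-- Contraction of the input register with the product bra `⊗_i bra i`. -/
def contractIn {N : ℕ} (bra : Fin N → Fin 2 → ℂ) (v : QIdx N × QIdx N → ℂ) : QIdx N → ℂ :=
  fun t => ∑ s : QIdx N, (∏ i, bra i (s i)) * v (s, t)

lemma diagonal_commute {α : Type*} [Fintype α] [DecidableEq α] (d e : α → ℂ) :
    Commute (Matrix.diagonal d) (Matrix.diagonal e) := by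
  unfold Commute SemiconjBy
  have h : (fun i => d i * e i) = fun i => e i * d i := by funext x; ring
  rw [Matrix.diagonal_mul_diagonal, Matrix.diagonal_mul_diagonal, h]

lemma Zg_eq_diagonal : Zg = Matrix.diagonal ![1, -1] := by
  ext i j
  fin_cases i <;> fin_cases j <;> simp [Zg, Matrix.diagonal]

lemma op1_diagonal (d : Fin 2 → ℂ) (i : ι) :
    op1 (Matrix.diagonal d) i = Matrix.diagonal (fun s => d (s i)) := by
  ext s t
  by_cases h : s = t
  · subst h
    simp [op1, Matrix.diagonal_apply_eq]
  · rw [Matrix.diagonal_apply_ne _ h]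
    by_cases hi : s i = t i
    · obtain ⟨k, hk⟩ : ∃ k, s k ≠ t k := Function.ne_iff.mp h
      have hki : k ≠ i := by rintro rfl; exact hk hi
      have h0 : (if s k = t k then (1 : ℂ) else 0) = 0 := by simp [hk]
      unfold op1
      rw [Finset.prod_eq_zero (Finset.mem_erase.mpr ⟨hki, Finset.mem_univ k⟩) h0]
      ring
    · unfold op1
      rw [Matrix.diagonal_apply_ne _ hi]
      ring

/-- The controlled-Z gate attached to an (undirected) edge `e`. -/
def czEdge {N : ℕ} (e : Sym2 (Fin N)) : MatQ N :=
  Matrix.diagonal fun s => if ∀ i ∈ e, s i = 1 then (-1 : ℂ) else 1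

/-- The unitary ∏_{{i,j} ∈ E(G)} CZ_{i,j} preparing the graph state (the
factors pairwise commute, so the product over the edge set is well defined). -/
def graphUnitary {N : ℕ} (G : SimpleGraph (Fin N)) [DecidableRel G.Adj] : MatQ N :=
  G.edgeFinset.noncommProd czEdge (by intro a _ b _ _; exact diagonal_commute _ _)

/-- The graph state |G⟩ = (∏_{{i,j} ∈ E(G)} CZ_{i,j}) |+⟩^{⊗N}. -/
def graphState {N : ℕ} (G : SimpleGraph (Fin N)) [DecidableRel G.Adj] : QIdx N → ℂ :=
  (graphUnitary G).mulVec (ketPlusAll (Fin N))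

/-- The stabilizer generator K_v = X_v · ∏_{w ∈ N_G(v)} Z_w of the graph state
(the Z factors pairwise commute, so the product is well defined). -/
def stabGen {N : ℕ} (G : SimpleGraph (Fin N)) [DecidableRel G.Adj] (v : Fin N) : MatQ N :=
  op1 Xg v *
    (G.neighborFinset v).noncommProd (fun w => op1 Zg w)
      (by
        intro a _ b _ _
        simp only [Function.onFun]
        rw [Zg_eq_diagonal, op1_diagonal, op1_diagonal]
        exact diagonal_commute _ _)

lemma op1_apply_eq_ite (P : Matrix (Fin 2) (Fin 2) ℂ) (i : ι) (s t : ι → Fin 2) :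
    op1 P i s t = if t = Function.update s i (t i) then P (s i) (t i) else 0 := by
  have hagree : (∀ j ∈ Finset.univ.erase i, s j = t j) ↔ t = Function.update s i (t i) := by
    simp [Function.eq_update_iff, eq_comm]
  simp only [op1, Finset.prod_boole, hagree, mul_ite, mul_one, mul_zero]

lemma op1_mulVec_apply (P : Matrix (Fin 2) (Fin 2) ℂ) (i : ι) (g : (ι → Fin 2) → ℂ)
    (s : ι → Fin 2) :
    (op1 P i *ᵥ g) s = ∑ b, P (s i) b * g (Function.update s i b) := by
  refine (Fintype.sum_of_injective _ (Function.update_injective s i) _ _ ?_ ?_).symm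
  · intro t ht
    have hne : t ≠ Function.update s i (t i) := fun h => ht ⟨t i, h.symm⟩
    simp only [op1_apply_eq_ite, if_neg hne, zero_mul]
  · intro b
    simp [op1_apply_eq_ite]

lemma op1_Xg_mulVec_apply (i : ι) (g : (ι → Fin 2) → ℂ) (s : ι → Fin 2) :
    (op1 Xg i *ᵥ g) s = g (Function.update s i (s i + 1)) := by
  rw [op1_mulVec_apply, Fin.sum_univ_two]
  generalize s i = a
  fin_cases a <;> simp [Xg]

lemma _root_.Matrix.noncommProd_diagonal {β n R : Type*} [Fintype n] [DecidableEq n]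
    [CommSemiring R] (s : Finset β) (d : β → n → R) (comm) :
    s.noncommProd (fun b => diagonal (d b)) comm = diagonal (fun a => ∏ b ∈ s, d b a) := by
  have h := Finset.map_noncommProd s d (fun _ _ _ _ _ => Commute.all _ _) (diagonalRingHom n R)
  rw [Finset.noncommProd_eq_prod, diagonalRingHom_apply, Finset.prod_fn] at h
  exact h.symm

lemma stabGen_eq {N : ℕ} (G : SimpleGraph (Fin N)) [DecidableRel G.Adj] (v : Fin N) :
    stabGen G v =
      op1 Xg v * diagonal fun s => ∏ w ∈ G.neighborFinset v, ![(1 : ℂ), -1] (s w) := by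
  rw [stabGen, ← noncommProd_diagonal _ _ fun _ _ _ _ _ => diagonal_commute _ _]
  congr 1
  exact Finset.noncommProd_congr rfl (fun w _ => by rw [Zg_eq_diagonal, op1_diagonal]) _

lemma _root_.SimpleGraph.prod_incidenceFinset_eq_prod_neighborFinset {V M : Type*}
    [DecidableEq V] [CommMonoid M] (G : SimpleGraph V) (v : V) [Fintype (G.neighborSet v)] (f : Sym2 V → M) :
    ∏ e ∈ G.incidenceFinset v, f e = ∏ w ∈ G.neighborFinset v, f s(v, w) := by
  have himage : G.incidenceFinset v = (G.neighborFinset v).image (s(v, ·)) := by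
    ext e
    induction e using Sym2.ind with
    | _ a b =>
      simp only [SimpleGraph.mem_incidenceFinset, SimpleGraph.incidenceSet, Set.mem_sep_iff,
        SimpleGraph.mem_edgeSet, Sym2.mem_iff, Finset.mem_image, SimpleGraph.mem_neighborFinset,
        Sym2.eq_iff]
      constructor
      · rintro ⟨hab, rfl | rfl⟩
        · exact ⟨b, hab, .inl ⟨rfl, rfl⟩⟩
        · exact ⟨a, hab.symm, .inr ⟨rfl, rfl⟩⟩
      · rintro ⟨c, hvc, ⟨rfl, rfl⟩ | ⟨rfl, rfl⟩⟩
        · exact ⟨hvc, .inl rfl⟩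
        · exact ⟨hvc.symm, .inr rfl⟩
  rw [himage, Finset.prod_image fun _ _ _ _ h => Sym2.congr_right.mp h]

def czPhase (e : Sym2 ι) (s : ι → Fin 2) : ℂ := if ∀ i ∈ e, s i = 1 then -1 else 1

lemma czEdge_eq_diagonal {N : ℕ} (e : Sym2 (Fin N)) : czEdge e = diagonal (czPhase e) := by
  -- not `rfl`: the two `if`s carry different `Decidable` instances
  unfold czEdge czPhase
  congr! 3

lemma graphUnitary_eq_diagonal {N : ℕ} (G : SimpleGraph (Fin N)) [DecidableRel G.Adj] :
    graphUnitary G = diagonal fun s => ∏ e ∈ G.edgeFinset, czPhase e s := by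
  rw [graphUnitary, ← noncommProd_diagonal _ _ fun _ _ _ _ _ => diagonal_commute _ _]
  exact Finset.noncommProd_congr rfl (fun e _ => czEdge_eq_diagonal e) _

lemma czPhase_update_of_notMem {e : Sym2 ι} {v : ι} (hv : v ∉ e) (s : ι → Fin 2) (b : Fin 2) :
    czPhase e (Function.update s v b) = czPhase e s := by
  have hagree : ∀ i ∈ e, Function.update s v b i = s i := fun i hi =>
    Function.update_of_ne (by rintro rfl; exact hv hi) _ _
  simp +contextual only [czPhase, hagree]

lemma pauliZ_sign_mul_czPhase_flip {v w : ι} (hvw : v ≠ w) (s : ι → Fin 2) :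
    ![(1 : ℂ), -1] (Function.update s v (s v + 1) w) *
        czPhase s(v, w) (Function.update s v (s v + 1)) = czPhase s(v, w) s := by
  simp only [czPhase, Sym2.mem_iff, forall_eq_or_imp, forall_eq, Function.update_self,
    Function.update_of_ne hvw.symm]
  generalize s v = a
  generalize s w = b
  fin_cases a <;> fin_cases b <;> norm_num

lemma prod_czPhase_flip (G : SimpleGraph ι) [DecidableRel G.Adj] (v : ι) (s : ι → Fin 2) :
    (∏ w ∈ G.neighborFinset v, ![(1 : ℂ), -1] (Function.update s v (s v + 1) w)) *
        ∏ e ∈ G.edgeFinset, czPhase e (Function.update s v (s v + 1)) =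
      ∏ e ∈ G.edgeFinset, czPhase e s := by
  simp only [← Finset.prod_filter_mul_prod_filter_not G.edgeFinset (v ∈ ·),
    ← G.incidenceFinset_eq_filter, G.prod_incidenceFinset_eq_prod_neighborFinset, ← mul_assoc,
    ← Finset.prod_mul_distrib]
  congr 1
  · refine Finset.prod_congr rfl fun w hw => pauliZ_sign_mul_czPhase_flip ?_ s
    exact G.ne_of_adj ((G.mem_neighborFinset v w).mp hw)
  · exact Finset.prod_congr rfl fun e he =>
      czPhase_update_of_notMem (Finset.mem_filter.mp he).2 s _

lemma ketPlusAll_apply_eq {κ : Type*} [Fintype κ] (s t : κ → Fin 2) :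
    ketPlusAll κ s = ketPlusAll κ t := by
  simp [ketPlusAll, ketPlus]

/-- every stabilizer generator `K_v` fixes the graph state `|G⟩`. -/
theorem graphState_stabilized {N : ℕ} (G : SimpleGraph (Fin N)) [DecidableRel G.Adj]
    (v : Fin N) :
    (stabGen G v).mulVec (graphState G) = graphState G := by
  ext s
  rw [graphState, stabGen_eq, graphUnitary_eq_diagonal, ← mulVec_mulVec, op1_Xg_mulVec_apply]
  simp only [mulVec_diagonal]
  rw [← mul_assoc, prod_czPhase_flip, ketPlusAll_apply_eq _ s]

end QCA

end
end

section
/- The unitary U_T of Eq. (16) implements the transformation rules of Eq. (15): for every N-qubit unitary T and every i = 1,…,N, U_T (X_i ⊗ 1) U_T† = X_i ⊗ T X_i T†, U_T (Z_i ⊗ 1) U_T† = Z_i ⊗ 1, U_T (1 ⊗ X_i) U_T† = Z_i ⊗ T Z_i T†, and U_T (1 ⊗ Z_i) U_T† = 1 ⊗ T X_i T†, where the first tensor factor is the input register and the second the output register. -/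
open Matrix Complex
open scoped Kronecker Classical

noncomputable section

/-!
Write `u := (1 ⊗ H) · CZ` for the two-qubit gate acting on the pair (input qubit `j`,
output qubit `j`). Each factor of `∏ H_j^{(out)}` and `∏ CZ_{j,j}` acts on a single such
pair, so `U_T = (1 ⊗ T) · ⊗_j u`. Conjugating an operator supported on pair `i` by `⊗_j u`
only sees the factor at `i` (the others cancel as `u` is unitary), so the rules reduce to the
4 × 4 identities `u (X ⊗ 1) u† = X ⊗ X`, `u (Z ⊗ 1) u† = Z ⊗ 1`, `u (1 ⊗ X) u† = Z ⊗ Z`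
and `u (1 ⊗ Z) u† = 1 ⊗ X`, after which `1 ⊗ T` conjugates the output register alone.
-/

lemma List.prod_ofFn_mulSingle {n : ℕ} {M : Fin n → Type*} [∀ i, Monoid (M i)]
    (g : ∀ i, M i) :
    (List.ofFn fun i => Pi.mulSingle i (g i)).prod = g := by
  simpa [Finset.noncommProd] using Finset.noncommProd_mulSingle g

lemma MonoidHom.prod_ofFn_map_mulSingle {n : ℕ} {M : Fin n → Type*} [∀ i, Monoid (M i)]
    {N : Type*} [Monoid N] (φ : (∀ i, M i) →* N) (g : ∀ i, M i) :
    (List.ofFn fun i => φ (Pi.mulSingle i (g i))).prod = φ g := by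
  conv_rhs => rw [← List.prod_ofFn_mulSingle g, map_list_prod, List.map_ofFn]
  rfl

lemma Pi.const_mul_mulSingle_mul_const {ι M : Type*} [DecidableEq ι] [Monoid M] {u v : M}
    (huv : u * v = 1) (i : ι) (a : M) :
    (fun _ => u) * Pi.mulSingle i a * (fun _ => v) = Pi.mulSingle i (u * a * v) := by
  funext j
  by_cases hj : j = i
  · subst hj; simp
  · simp [Pi.mulSingle_eq_of_ne hj, huv]

namespace Matrix

variable {ι κ κ' R : Type*} [Fintype ι] [CommSemiring R]

def piKronecker (f : ι → Matrix κ κ R) : Matrix (ι → κ) (ι → κ) R :=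
  of fun s t => ∏ j, f j (s j) (t j)

@[simp]
lemma piKronecker_apply (f : ι → Matrix κ κ R) (s t : ι → κ) :
    piKronecker f s t = ∏ j, f j (s j) (t j) := rfl

lemma piKronecker_mul [DecidableEq ι] [Fintype κ] (f g : ι → Matrix κ κ R) :
    piKronecker f * piKronecker g = piKronecker (f * g) := by
  ext s t
  simp_rw [mul_apply, piKronecker_apply, Pi.mul_apply, mul_apply, Finset.prod_univ_sum,
    Fintype.piFinset_univ, Finset.prod_mul_distrib]

lemma piKronecker_diagonal [DecidableEq κ] (d : ι → κ → R) :
    piKronecker (fun j => diagonal (d j)) = diagonal fun s => ∏ j, d j (s j) := by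
  ext s t
  by_cases h : s = t
  · subst h; simp
  · obtain ⟨j, hj⟩ := Function.ne_iff.mp h
    rw [diagonal_apply_ne _ h, piKronecker_apply]
    exact Finset.prod_eq_zero (Finset.mem_univ j) (diagonal_apply_ne _ hj)

lemma piKronecker_one [DecidableEq κ] : piKronecker (1 : ι → Matrix κ κ R) = 1 := by
  rw [Pi.one_def]
  simpa using piKronecker_diagonal (ι := ι) fun _ (_ : κ) => (1 : R)

def piKroneckerHom [DecidableEq ι] [Fintype κ] [DecidableEq κ] :
    (ι → Matrix κ κ R) →* Matrix (ι → κ) (ι → κ) R where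
  toFun := piKronecker
  map_one' := piKronecker_one
  map_mul' f g := (piKronecker_mul f g).symm

lemma piKronecker_mulSingle_diagonal [DecidableEq ι] [DecidableEq κ] (d : κ → R) (i : ι) :
    piKronecker (Pi.mulSingle i (diagonal d)) = diagonal fun s => d (s i) := by
  have hdiag :
      Pi.mulSingle i (diagonal d) = fun j => diagonal ((Pi.mulSingle i d : ι → κ → R) j) := by
    funext j
    exact (Pi.apply_mulSingle (fun _ => (diagonal : (κ → R) → Matrix κ κ R))
      (fun _ => diagonal_one) i d j).symm
  rw [hdiag, piKronecker_diagonal]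
  congr 1
  funext s
  rw [Fintype.prod_eq_single i fun j hj => by simp [Pi.mulSingle_eq_of_ne hj],
    Pi.mulSingle_eq_same]

lemma piKronecker_conjTranspose [StarRing R] (f : ι → Matrix κ κ R) :
    (piKronecker f)ᴴ = piKronecker fun j => (f j)ᴴ := by
  ext s t
  simp [star_prod]

section Pair

variable [DecidableEq ι] [Fintype κ] [DecidableEq κ] [Fintype κ'] [DecidableEq κ']

/-- `⊗_j F j` for operators `F j` on pairs, with the index regrouped so that the `j`-th pair
couples coordinate `j` of the first factor of `(ι → κ) × (ι → κ')` with coordinate `j` of the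
second. -/
def piKroneckerPairHom :
    (ι → Matrix (κ × κ') (κ × κ') R) →* Matrix ((ι → κ) × (ι → κ')) ((ι → κ) × (ι → κ')) R :=
  (reindexAlgEquiv R R
    (Equiv.arrowProdEquivProdArrow ι (fun _ => κ) fun _ => κ')).toMonoidHom.comp piKroneckerHom

lemma piKroneckerPairHom_apply (F : ι → Matrix (κ × κ') (κ × κ') R) :
    piKroneckerPairHom F =
      reindex (Equiv.arrowProdEquivProdArrow ι (fun _ => κ) fun _ => κ')
        (Equiv.arrowProdEquivProdArrow ι (fun _ => κ) fun _ => κ') (piKronecker F) := rfl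

lemma piKronecker_kronecker_piKronecker (f : ι → Matrix κ κ R) (g : ι → Matrix κ' κ' R) :
    piKronecker f ⊗ₖ piKronecker g = piKroneckerPairHom fun j => f j ⊗ₖ g j := by
  ext ⟨s, s'⟩ ⟨t, t'⟩
  simp [piKroneckerPairHom_apply, Finset.prod_mul_distrib]

lemma piKroneckerPairHom_conjTranspose [StarRing R] (F : ι → Matrix (κ × κ') (κ × κ') R) :
    (piKroneckerPairHom F)ᴴ = piKroneckerPairHom fun j => (F j)ᴴ := by
  rw [piKroneckerPairHom_apply, piKroneckerPairHom_apply, conjTranspose_reindex,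
    piKronecker_conjTranspose]

end Pair

end Matrix

namespace QCA

lemma op1_eq_piKronecker {ι : Type*} [Fintype ι] [DecidableEq ι]
    (P : Matrix (Fin 2) (Fin 2) ℂ) (i : ι) : op1 P i = piKronecker (Pi.mulSingle i P) := by
  ext s t
  rw [piKronecker_apply, ← Finset.mul_prod_erase _ _ (Finset.mem_univ i), Pi.mulSingle_eq_same]
  refine congrArg _ (Finset.prod_congr rfl fun j hj => ?_)
  rw [Pi.mulSingle_eq_of_ne (Finset.ne_of_mem_erase hj), one_apply]

lemma op1_one {ι : Type*} [Fintype ι] [DecidableEq ι] (i : ι) :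
    op1 (1 : Matrix (Fin 2) (Fin 2) ℂ) i = 1 := by
  rw [op1_eq_piKronecker, Pi.mulSingle_one, piKronecker_one]

lemma op1_kronecker_op1 {ι : Type*} [Fintype ι] [DecidableEq ι]
    (P Q : Matrix (Fin 2) (Fin 2) ℂ) (i : ι) :
    op1 P i ⊗ₖ op1 Q i = piKroneckerPairHom (Pi.mulSingle i (P ⊗ₖ Q)) := by
  rw [op1_eq_piKronecker, op1_eq_piKronecker, piKronecker_kronecker_piKronecker]
  congr 1
  funext j
  exact Pi.apply_mulSingle₂ (fun _ => kronecker) (fun _ => one_kronecker_one) i P Q j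

lemma inv_sqrt_two_mul_self : (Real.sqrt 2 : ℂ)⁻¹ * (Real.sqrt 2 : ℂ)⁻¹ = 2⁻¹ := by
  rw [← mul_inv, ← Complex.ofReal_mul, Real.mul_self_sqrt zero_le_two, Complex.ofReal_ofNat]

lemma Hg_mul_Hg : Hg * Hg = 1 := by
  rw [Hg, smul_mul_smul_comm, inv_sqrt_two_mul_self]
  ext a b
  fin_cases a <;> fin_cases b <;> norm_num [mul_apply, Fin.sum_univ_two, one_apply]

lemma Hg_conjTranspose : Hgᴴ = Hg := by
  ext a b
  fin_cases a <;> fin_cases b <;> simp [Hg, conjTranspose_apply]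

lemma Hg_Zg_Hg : Hg * Zg * Hg = Xg := by
  rw [Hg, Matrix.smul_mul, smul_mul_smul_comm, inv_sqrt_two_mul_self]
  ext a b
  fin_cases a <;> fin_cases b <;> norm_num [mul_apply, Fin.sum_univ_two, Zg, Xg]

lemma Hg_Xg_Hg : Hg * Xg * Hg = Zg := by
  rw [← Hg_Zg_Hg, ← mul_assoc, ← mul_assoc, Hg_mul_Hg, one_mul, mul_assoc, Hg_mul_Hg, mul_one]

def czGate : Matrix (Fin 2 × Fin 2) (Fin 2 × Fin 2) ℂ :=
  diagonal fun p => if p.1 = 1 ∧ p.2 = 1 then (-1 : ℂ) else 1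

lemma czGate_conjTranspose : czGateᴴ = czGate := by
  rw [czGate, diagonal_conjTranspose]
  congr 1
  funext p
  simp only [Pi.star_apply]
  split_ifs <;> simp

lemma czGate_conj_one_one :
    czGate * ((1 : Matrix (Fin 2) (Fin 2) ℂ) ⊗ₖ 1) * czGate = 1 ⊗ₖ 1 := by
  ext ⟨a, b⟩ ⟨c, d⟩
  rw [czGate, mul_diagonal, diagonal_mul]
  fin_cases a <;> fin_cases b <;> fin_cases c <;> fin_cases d <;> simp [one_apply]

lemma czGate_conj_X_one : czGate * (Xg ⊗ₖ 1) * czGate = Xg ⊗ₖ Zg := by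
  ext ⟨a, b⟩ ⟨c, d⟩
  rw [czGate, mul_diagonal, diagonal_mul]
  fin_cases a <;> fin_cases b <;> fin_cases c <;> fin_cases d <;> simp [one_apply, Xg, Zg]

lemma czGate_conj_Z_one : czGate * (Zg ⊗ₖ 1) * czGate = Zg ⊗ₖ 1 := by
  ext ⟨a, b⟩ ⟨c, d⟩
  rw [czGate, mul_diagonal, diagonal_mul]
  fin_cases a <;> fin_cases b <;> fin_cases c <;> fin_cases d <;> simp [one_apply, Zg]

lemma czGate_conj_one_X : czGate * (1 ⊗ₖ Xg) * czGate = Zg ⊗ₖ Xg := by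
  ext ⟨a, b⟩ ⟨c, d⟩
  rw [czGate, mul_diagonal, diagonal_mul]
  fin_cases a <;> fin_cases b <;> fin_cases c <;> fin_cases d <;> simp [one_apply, Xg, Zg]

lemma czGate_conj_one_Z : czGate * (1 ⊗ₖ Zg) * czGate = 1 ⊗ₖ Zg := by
  ext ⟨a, b⟩ ⟨c, d⟩
  rw [czGate, mul_diagonal, diagonal_mul]
  fin_cases a <;> fin_cases b <;> fin_cases c <;> fin_cases d <;> simp [one_apply, Zg]

def hadamardCZ : Matrix (Fin 2 × Fin 2) (Fin 2 × Fin 2) ℂ := (1 ⊗ₖ Hg) * czGate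

lemma hadamardCZ_conj {A B A' B' : Matrix (Fin 2) (Fin 2) ℂ}
    (h : czGate * (A ⊗ₖ B) * czGate = A' ⊗ₖ B') :
    hadamardCZ * (A ⊗ₖ B) * hadamardCZᴴ = A' ⊗ₖ (Hg * B' * Hg) := by
  rw [hadamardCZ, conjTranspose_mul, czGate_conjTranspose, conjTranspose_kronecker,
    conjTranspose_one, Hg_conjTranspose]
  calc (1 ⊗ₖ Hg) * czGate * (A ⊗ₖ B) * (czGate * (1 ⊗ₖ Hg))
      = (1 ⊗ₖ Hg) * (czGate * (A ⊗ₖ B) * czGate) * (1 ⊗ₖ Hg) := by simp only [mul_assoc]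
    _ = A' ⊗ₖ (Hg * B' * Hg) := by
      rw [h, ← mul_kronecker_mul, ← mul_kronecker_mul, one_mul, mul_one]

lemma hadamardCZ_mul_conjTranspose : hadamardCZ * hadamardCZᴴ = 1 := by
  simpa [one_kronecker_one, Hg_mul_Hg] using hadamardCZ_conj czGate_conj_one_one

lemma czIO_eq_piKroneckerPairHom {N : ℕ} (i : Fin N) :
    czIO i = piKroneckerPairHom (Pi.mulSingle i czGate) := by
  rw [piKroneckerPairHom_apply, czGate, piKronecker_mulSingle_diagonal, reindex_apply,
    submatrix_diagonal_equiv]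
  rfl

lemma UT_eq_one_kronecker_mul {N : ℕ} (T : MatQ N) :
    UT T = ((1 : MatQ N) ⊗ₖ T) * piKroneckerPairHom fun _ => hadamardCZ := by
  have hH : (List.ofFn fun i : Fin N => (1 : MatQ N) ⊗ₖ op1 Hg i).prod
      = piKroneckerPairHom fun _ => 1 ⊗ₖ Hg := by
    rw [← MonoidHom.prod_ofFn_map_mulSingle]
    congr 2
    funext i
    rw [← op1_kronecker_op1, op1_one]
  have hCZ : (List.ofFn fun i : Fin N => czIO i).prod = piKroneckerPairHom fun _ => czGate := by
    rw [← MonoidHom.prod_ofFn_map_mulSingle]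
    exact congrArg _ (congrArg List.ofFn (funext czIO_eq_piKroneckerPairHom))
  rw [UT, hH, hCZ, mul_assoc, ← map_mul]
  rfl

lemma UT_conj_op1_kronecker_op1 {N : ℕ} (T : MatQ N) {P Q P' Q' : Matrix (Fin 2) (Fin 2) ℂ}
    (h : hadamardCZ * (P ⊗ₖ Q) * hadamardCZᴴ = P' ⊗ₖ Q') (i : Fin N) :
    UT T * (op1 P i ⊗ₖ op1 Q i) * (UT T)ᴴ = op1 P' i ⊗ₖ (T * op1 Q' i * Tᴴ) := by
  rw [UT_eq_one_kronecker_mul, op1_kronecker_op1, conjTranspose_mul,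
    piKroneckerPairHom_conjTranspose, conjTranspose_kronecker, conjTranspose_one]
  calc ((1 : MatQ N) ⊗ₖ T) * piKroneckerPairHom (fun _ => hadamardCZ) *
        piKroneckerPairHom (Pi.mulSingle i (P ⊗ₖ Q)) *
        (piKroneckerPairHom (fun _ => hadamardCZᴴ) * ((1 : MatQ N) ⊗ₖ Tᴴ))
      = ((1 : MatQ N) ⊗ₖ T) * piKroneckerPairHom ((fun _ => hadamardCZ) *
          Pi.mulSingle i (P ⊗ₖ Q) * fun _ => hadamardCZᴴ) * ((1 : MatQ N) ⊗ₖ Tᴴ) := by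
        simp only [map_mul, mul_assoc]
    _ = ((1 : MatQ N) ⊗ₖ T) * (op1 P' i ⊗ₖ op1 Q' i) * ((1 : MatQ N) ⊗ₖ Tᴴ) := by
        rw [Pi.const_mul_mulSingle_mul_const hadamardCZ_mul_conjTranspose, h, op1_kronecker_op1]
    _ = op1 P' i ⊗ₖ (T * op1 Q' i * Tᴴ) := by
        rw [← mul_kronecker_mul, ← mul_kronecker_mul, one_mul, mul_one]

/-- the unitary `U_T` of Eq. (16) implements the transformation rules of
Eq. (15) on the input and output registers. -/
theorem UT_conjugation {N : ℕ} (T : MatQ N)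
    (hT : T ∈ Matrix.unitaryGroup (QIdx N) ℂ) (i : Fin N) :
    UT T * (op1 Xg i ⊗ₖ (1 : MatQ N)) * (UT T)ᴴ = op1 Xg i ⊗ₖ (T * op1 Xg i * Tᴴ) ∧
    UT T * (op1 Zg i ⊗ₖ (1 : MatQ N)) * (UT T)ᴴ = op1 Zg i ⊗ₖ (1 : MatQ N) ∧
    UT T * ((1 : MatQ N) ⊗ₖ op1 Xg i) * (UT T)ᴴ = op1 Zg i ⊗ₖ (T * op1 Zg i * Tᴴ) ∧
    UT T * ((1 : MatQ N) ⊗ₖ op1 Zg i) * (UT T)ᴴ = (1 : MatQ N) ⊗ₖ (T * op1 Xg i * Tᴴ) := by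
  have hTT : T * Tᴴ = 1 := Matrix.mem_unitaryGroup_iff.mp hT
  have hX1 := UT_conj_op1_kronecker_op1 T (hadamardCZ_conj czGate_conj_X_one) i
  have hZ1 := UT_conj_op1_kronecker_op1 T (hadamardCZ_conj czGate_conj_Z_one) i
  have h1X := UT_conj_op1_kronecker_op1 T (hadamardCZ_conj czGate_conj_one_X) i
  have h1Z := UT_conj_op1_kronecker_op1 T (hadamardCZ_conj czGate_conj_one_Z) i
  rw [Hg_Zg_Hg] at hX1 h1Z
  rw [Hg_Xg_Hg] at h1X
  rw [mul_one, Hg_mul_Hg, op1_one, mul_one, hTT] at hZ1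
  simp only [op1_one] at hX1 h1X h1Z
  exact ⟨hX1, hZ1, h1X, h1Z⟩

end QCA

end
end

section
/- Corollary 1 (MBQC without corrections): let T be a unitary on N qubits with T^L = 1, let D be a multiple of L, let θ_i^j ∈ ℝ and measurement outcomes m_i^j ∈ {0,1} for i = 1,…,N, j = 1,…,D. For each j define the linear map E_j^{(m)} : (ℂ²)^{⊗N} → (ℂ²)^{⊗N} by E_j^{(m)}(v) := (√2)^N · ((⊗_{i=1}^{N} ⟨+| Z^{m_i^j}) ⊗ 1) · U_T · ( (∏_{i=N,…,1} exp(iθ_i^j Z_i)) v ⊗ |+⟩^{⊗N} ), i.e. one uncorrected unit cell of Algorithm 1 with outcomes m_i^j. Then E_D^{(m)} ∘ ⋯ ∘ E_1^{(m)} = ∏_{j=D,…,1} ∏_{i=N,…,1} ( T^{e(j)} Z_i (T^{e(j)})† )^{m_i^j} · exp( iθ_i^j · T^{e(j)} Z_i (T^{e(j)})† ), where e(j) := (L - (j mod L) + 1) mod L and products are ordered so that the factor with the smallest index acts first (rightmost). -/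
/-!
Entangling the input qubit-wise with an output register in `|+⟩^{⊗N}` through CZ gates and then
applying Hadamards copies the computational basis: `U_T (|s⟩ ⊗ |+⟩^{⊗N}) = |s⟩ ⊗ T|s⟩`.
Contracting the input with `⊗_i ⟨+|Z^{m_i}` therefore teleports the state up to the factor
`(√2)^{-N}`, so the `j`-th uncorrected cell acts as `T Z^{m_j} R_j`, where `R_j` is its layer of
Z-rotations. As `T` is unitary with `T^L = 1`, `T^{e(j)} = (T^{j-1})†`, so the `j`-th factor on the
right is `(T^{j-1})† Z^{m_j} R_j T^{j-1}`. These conjugations telescope to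
`(T^D)† ∏_j T Z^{m_j} R_j`, and `T^D = 1` because `L ∣ D`.
-/

open Matrix Complex
open scoped Kronecker Classical

noncomputable section

namespace QCA

variable {ι : Type*} [Fintype ι] [DecidableEq ι]

theorem list_prod_reverse_ofFn_units_conj {M : Type*} [Monoid M] (w : Mˣ) {k : ℕ} (A : Fin k → M) :
    (List.ofFn fun i => (w : M) * A i * ↑w⁻¹).reverse.prod =
      w * (List.ofFn A).reverse.prod * ↑w⁻¹ := by
  simpa [ConjAct.units_smul_def, List.map_reverse, Function.comp_def] using
    (List.smul_prod' (r := ConjAct.toConjAct w) (l := (List.ofFn A).reverse)).symm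

theorem foldl_ofFn_mulVec {n R : Type*} [Fintype n] [DecidableEq n] [CommSemiring R] {k : ℕ}
    (C : Fin k → Matrix n n R) (v : n → R) :
    (List.ofFn fun j w => C j *ᵥ w).foldl (fun w f => f w) v = (List.ofFn C).reverse.prod *ᵥ v := by
  rw [show (List.ofFn fun j w => C j *ᵥ w) = (List.ofFn C).map fun C w => C *ᵥ w by
    rw [List.map_ofFn]; rfl]
  generalize List.ofFn C = l
  induction l generalizing v with
  | nil => simp
  | cons C l ih => simp [ih, mulVec_mulVec]

section Diagonal

variable {n R : Type*} [Fintype n] [DecidableEq n] [CommSemiring R] {k : ℕ}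

theorem list_prod_ofFn_diagonal (d : Fin k → n → R) :
    (List.ofFn fun i => diagonal (d i)).prod = diagonal fun x => ∏ i, d i x := by
  have h := map_list_prod (diagonalRingHom n R) (List.ofFn d)
  rw [List.map_ofFn, List.prod_ofFn] at h
  simpa [Function.comp_def, Finset.prod_fn] using h.symm

theorem list_prod_reverse_ofFn_diagonal (d : Fin k → n → R) :
    (List.ofFn fun i => diagonal (d i)).reverse.prod = diagonal fun x => ∏ i, d i x := by
  have h := map_list_prod (diagonalRingHom n R) (List.ofFn d).reverse
  rw [List.map_reverse, List.map_ofFn, List.prod_reverse, List.prod_ofFn] at h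
  simpa [Function.comp_def, Finset.prod_fn] using h.symm

end Diagonal

theorem list_prod_map_one_kronecker {m n R : Type*} [Fintype m] [DecidableEq m] [Fintype n]
    [DecidableEq n] [CommSemiring R] (l : List (Matrix n n R)) :
    (l.map fun A => (1 : Matrix m m R) ⊗ₖ A).prod = 1 ⊗ₖ l.prod := by
  induction l with
  | nil => simp
  | cons A l ih =>
    rw [List.map_cons, List.prod_cons, ih, List.prod_cons, ← mul_kronecker_mul, one_mul]

section TensorPi

variable {κ : Type*} [Fintype κ]

def tensorPi (f : κ → Matrix (Fin 2) (Fin 2) ℂ) : Matrix (κ → Fin 2) (κ → Fin 2) ℂ :=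
  of fun s t => ∏ i, f i (s i) (t i)

theorem tensorPi_apply (f : κ → Matrix (Fin 2) (Fin 2) ℂ) (s t : κ → Fin 2) :
    tensorPi f s t = ∏ i, f i (s i) (t i) := rfl

theorem tensorPi_one : tensorPi (fun _ : κ => (1 : Matrix (Fin 2) (Fin 2) ℂ)) = 1 := by
  ext s t
  simp [tensorPi_apply, one_apply, Fintype.prod_ite_zero, funext_iff]

theorem tensorPi_mul [DecidableEq κ] (f g : κ → Matrix (Fin 2) (Fin 2) ℂ) :
    tensorPi f * tensorPi g = tensorPi (f * g) := by
  ext s t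
  simp only [mul_apply, tensorPi_apply, Pi.mul_apply, ← Finset.prod_mul_distrib]
  rw [Finset.prod_univ_sum, Fintype.piFinset_univ]

theorem op1_eq_tensorPi [DecidableEq κ] (P : Matrix (Fin 2) (Fin 2) ℂ) (i : κ) :
    op1 P i = tensorPi (Pi.mulSingle i P) := by
  ext s t
  rw [tensorPi_apply, ← Finset.mul_prod_erase _ _ (Finset.mem_univ i)]
  refine congrArg₂ _ (by simp) (Finset.prod_congr rfl fun j hj => ?_)
  rw [Pi.mulSingle_eq_of_ne (Finset.ne_of_mem_erase hj), one_apply]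

theorem list_prod_map_op1 [DecidableEq κ] (P : κ → Matrix (Fin 2) (Fin 2) ℂ) {l : List κ}
    (hl : l.Nodup) :
    (l.map fun i => op1 (P i) i).prod = tensorPi fun j => if j ∈ l then P j else 1 := by
  induction l with
  | nil => simpa using tensorPi_one.symm
  | cons a l ih =>
    obtain ⟨ha, hl⟩ := List.nodup_cons.mp hl
    rw [List.map_cons, List.prod_cons, ih hl, op1_eq_tensorPi, tensorPi_mul]
    congr 1
    funext j
    by_cases hj : j = a
    · subst hj
      simp [ha]
    · simp [hj]

theorem list_prod_ofFn_op1 {N : ℕ} (P : Fin N → Matrix (Fin 2) (Fin 2) ℂ) :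
    (List.ofFn fun i => op1 (P i) i).prod = tensorPi P := by
  rw [List.ofFn_eq_map, list_prod_map_op1 P (List.nodup_finRange N)]
  simp

end TensorPi

def zSign : Fin 2 → ℂ := ![1, -1]

theorem Zg_pow (k : ℕ) : Zg ^ k = diagonal (zSign ^ k) := by
  rw [Zg_eq_diagonal, diagonal_pow]
  rfl

theorem rotZ_eq_diagonal (θ : ℝ) (i : ι) :
    rotZ θ i = diagonal fun s => NormedSpace.exp ((θ : ℂ) * I * zSign (s i)) := by
  rw [rotZ, Zg_eq_diagonal, op1_diagonal, ← diagonal_smul, exp_diagonal]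
  congr 1
  funext s
  simp [zSign]

theorem op1_Zg_pow_mul_rotZ (k : ℕ) (θ : ℝ) (i : ι) :
    op1 Zg i ^ k * rotZ θ i =
      diagonal fun s => zSign (s i) ^ k * NormedSpace.exp ((θ : ℂ) * I * zSign (s i)) := by
  rw [rotZ_eq_diagonal, Zg_eq_diagonal, op1_diagonal, diagonal_pow, diagonal_mul_diagonal]
  rfl

def zPow (m : ι → Fin 2) : Matrix (ι → Fin 2) (ι → Fin 2) ℂ :=
  diagonal fun s => ∏ i, zSign (s i) ^ (m i : ℕ)

theorem list_prod_reverse_ofFn_Z_pow_mul_rotZ {N : ℕ} (m : Fin N → Fin 2) (θ : Fin N → ℝ) :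
    (List.ofFn fun i => op1 Zg i ^ (m i : ℕ) * rotZ (θ i) i).reverse.prod =
      zPow m * (List.ofFn fun i => rotZ (θ i) i).reverse.prod := by
  simp only [op1_Zg_pow_mul_rotZ]
  simp only [rotZ_eq_diagonal, list_prod_reverse_ofFn_diagonal, zPow, diagonal_mul_diagonal,
    Finset.prod_mul_distrib]

theorem sum_Hg_mul_cz_ketPlus (r s : Fin 2) :
    ∑ x, Hg r x * ((if s = 1 ∧ x = 1 then (-1 : ℂ) else 1) * ketPlus x) =
      if r = s then 1 else 0 := by
  have h2 : (Real.sqrt 2 : ℂ) * Real.sqrt 2 = 2 := by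
    rw [← Complex.ofReal_mul, Real.mul_self_sqrt zero_le_two]
    norm_num
  have hne : (Real.sqrt 2 : ℂ) ≠ 0 := by
    rintro h
    simp [h] at h2
  fin_cases r <;> fin_cases s <;> simp [Hg, ketPlus, Fin.sum_univ_two] <;> field_simp <;>
    linear_combination -h2

/-- `H^{⊗N} Z^s |+⟩^{⊗N} = |s⟩`, the CZ phases `(-1)^{s·b}` being those of `Z^s`. -/
theorem tensorPi_Hg_mulVec_cz_ketPlusAll {κ : Type*} [Fintype κ] [DecidableEq κ]
    (s : κ → Fin 2) :
    tensorPi (fun _ => Hg) *ᵥ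
        (fun b => (∏ i, if s i = 1 ∧ b i = 1 then (-1 : ℂ) else 1) * ketPlusAll κ b) =
      Pi.single s 1 := by
  funext r
  simp only [mulVec, dotProduct, tensorPi_apply, ketPlusAll, ← Finset.prod_mul_distrib]
  trans ∏ i, ∑ x, Hg (r i) x * ((if s i = 1 ∧ x = 1 then (-1 : ℂ) else 1) * ketPlus x)
  · rw [Finset.prod_univ_sum, Fintype.piFinset_univ]
  simp only [sum_Hg_mul_cz_ketPlus, Fintype.prod_ite_zero, Pi.single_apply, funext_iff]
  simp

theorem UT_eq {N : ℕ} (T : MatQ N) :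
    UT T = ((1 : MatQ N) ⊗ₖ (T * tensorPi fun _ => Hg)) *
      diagonal fun p => ∏ i, if p.1 i = 1 ∧ p.2 i = 1 then (-1 : ℂ) else 1 := by
  have hH : (List.ofFn fun i : Fin N => (1 : MatQ N) ⊗ₖ op1 Hg i).prod =
      (1 : MatQ N) ⊗ₖ tensorPi fun _ => Hg := by
    rw [← list_prod_ofFn_op1, ← list_prod_map_one_kronecker, List.map_ofFn]
    rfl
  rw [UT, hH]
  simp only [czIO, list_prod_ofFn_diagonal, ← mul_kronecker_mul, one_mul]

theorem UT_mulVec_kronVec_ketPlusAll {N : ℕ} (T : MatQ N) (u : QIdx N → ℂ) (s t : QIdx N) :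
    (UT T *ᵥ kronVec u (ketPlusAll (Fin N))) (s, t) = T t s * u s := by
  have hcopy := congrFun (congrArg (T *ᵥ ·) (tensorPi_Hg_mulVec_cz_ketPlusAll s)) t
  rw [mulVec_mulVec, mulVec_single_one, col_apply] at hcopy
  rw [UT_eq, ← mulVec_mulVec, funext (mulVec_diagonal _ _), ← hcopy, mulVec, dotProduct,
    Fintype.sum_prod_type]
  simp only [kroneckerMap_apply, one_apply, ite_mul, one_mul, zero_mul, mulVec, dotProduct,
    Finset.sum_mul, kronVec]
  rw [Finset.sum_comm]
  simp only [Finset.sum_ite_eq, Finset.mem_univ, if_true]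
  exact Finset.sum_congr rfl fun b _ => by ring

theorem braPlus_vecMul_Zg_pow (k : ℕ) :
    braPlus ᵥ* Zg ^ k = fun x => (Real.sqrt 2 : ℂ)⁻¹ * zSign x ^ k := by
  funext x
  rw [Zg_pow, vecMul_diagonal]
  simp [braPlus, ketPlus]

theorem unitCell_eq_mul_zPow {N : ℕ} (T : MatQ N) (m : Fin N → Fin 2) (u : QIdx N → ℂ) :
    (Real.sqrt 2 : ℂ) ^ N • contractIn (fun i => braPlus ᵥ* Zg ^ (m i : ℕ))
        (UT T *ᵥ kronVec u (ketPlusAll (Fin N))) = (T * zPow m) *ᵥ u := by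
  have hsqrt : (Real.sqrt 2 : ℂ) ^ N * (Real.sqrt 2 : ℂ)⁻¹ ^ N = 1 := by
    rw [← mul_pow, mul_inv_cancel₀ (by simp), one_pow]
  funext t
  simp only [Pi.smul_apply, smul_eq_mul, contractIn, UT_mulVec_kronVec_ketPlusAll,
    braPlus_vecMul_Zg_pow, Finset.prod_mul_distrib, Finset.prod_const, Finset.card_univ,
    Fintype.card_fin, Finset.mul_sum]
  simp only [mulVec, dotProduct, zPow, mul_diagonal]
  refine Finset.sum_congr rfl fun s _ => ?_
  linear_combination (∏ i, zSign (s i) ^ (m i : ℕ)) * T t s * u s * hsqrt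

section Unitary

variable {M : Type*} [Monoid M] [StarMul M] {T : M}

theorem list_prod_reverse_ofFn_star_pow_conj (hT : T ∈ unitary M) {k : ℕ} (A : Fin k → M) :
    (List.ofFn fun j : Fin k => star (T ^ (j : ℕ)) * A j * T ^ (j : ℕ)).reverse.prod =
      star (T ^ k) * (List.ofFn fun j => T * A j).reverse.prod := by
  induction k with
  | zero => simp
  | succ k ih =>
    simp only [List.ofFn_succ', List.concat_eq_append, List.reverse_append, List.prod_append,
      List.reverse_singleton, List.prod_singleton, Fin.val_last, Fin.val_castSucc]
    rw [ih fun j => A j.castSucc, mul_assoc _ (T ^ k), ← mul_assoc (T ^ k),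
      Unitary.mul_star_self_of_mem (pow_mem hT k), one_mul, pow_succ', star_mul]
    simp only [mul_assoc]
    rw [← mul_assoc (star T) T, Unitary.star_mul_self_of_mem hT, one_mul]

/-- Checked in `ZMod L`; the truncated subtraction is harmless as `(j + 1) % L < L`. -/
theorem dvd_sub_mod_add_one_mod_add {L : ℕ} (hL : 1 ≤ L) (j : ℕ) :
    L ∣ (L - (j + 1) % L + 1) % L + j := by
  rw [← ZMod.natCast_eq_zero_iff, Nat.cast_add, ZMod.natCast_mod, Nat.cast_add,
    Nat.cast_sub (Nat.mod_lt _ (by omega)).le, ZMod.natCast_mod, ZMod.natCast_self]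
  push_cast
  ring

theorem pow_sub_mod_add_one_mod_eq_star_pow (hT : T ∈ unitary M) {L : ℕ} (hL : 1 ≤ L)
    (hTL : T ^ L = 1) (j : ℕ) : T ^ ((L - (j + 1) % L + 1) % L) = star (T ^ j) := by
  obtain ⟨c, hc⟩ := dvd_sub_mod_add_one_mod_add hL j
  calc T ^ ((L - (j + 1) % L + 1) % L)
      = T ^ ((L - (j + 1) % L + 1) % L) * (T ^ j * star (T ^ j)) := by
        rw [Unitary.mul_star_self_of_mem (pow_mem hT j), mul_one]
    _ = star (T ^ j) := by rw [← mul_assoc, ← pow_add, hc, pow_mul, hTL, one_pow, one_mul]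

end Unitary

theorem list_prod_reverse_ofFn_unitary_conj_pow_mul_exp {n : Type*} [Fintype n] [DecidableEq n]
    {W : Matrix n n ℂ} (hW : W ∈ unitaryGroup n ℂ) {k : ℕ} (X : Fin k → Matrix n n ℂ)
    (e : Fin k → ℕ) (c : Fin k → ℂ) :
    (List.ofFn fun i =>
        (W * X i * Wᴴ) ^ e i * NormedSpace.exp (c i • (W * X i * Wᴴ))).reverse.prod =
      W * (List.ofFn fun i => X i ^ e i * NormedSpace.exp (c i • X i)).reverse.prod * Wᴴ := by
  set w : (Matrix n n ℂ)ˣ := Unitary.toUnits ⟨W, hW⟩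
  have hconj : ∀ A, W * A * Wᴴ = (w : Matrix n n ℂ) * A * (↑(w⁻¹) : Matrix n n ℂ) :=
    fun _ => rfl
  have hfactor : ∀ i, (W * X i * Wᴴ) ^ e i * NormedSpace.exp (c i • (W * X i * Wᴴ)) =
      (w : Matrix n n ℂ) * (X i ^ e i * NormedSpace.exp (c i • X i)) *
        (↑(w⁻¹) : Matrix n n ℂ) := by
    intro i
    rw [hconj, Units.conj_pow, ← smul_mul_assoc, ← mul_smul_comm, exp_units_conj]
    simp only [mul_assoc, Units.inv_mul_cancel_left]
  simp only [hfactor]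
  rw [list_prod_reverse_ofFn_units_conj, hconj]

/-- `j : Fin D` stands for the paper's index `j + 1 ∈ {1,…,D}`. -/
theorem mbqc_without_corrections {N L D : ℕ} (hL : 1 ≤ L) (T : MatQ N)
    (hT : T ∈ Matrix.unitaryGroup (QIdx N) ℂ) (hTL : T ^ L = 1) (hD : L ∣ D)
    (θ : Fin D → Fin N → ℝ) (m : Fin D → Fin N → Fin 2) (v : QIdx N → ℂ) :
    (List.ofFn fun j : Fin D => fun w : QIdx N → ℂ =>
        ((Real.sqrt 2 : ℂ) ^ N) •
          contractIn (fun i => Matrix.vecMul braPlus (Zg ^ (m j i : ℕ)))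
            ((UT T).mulVec (kronVec
              (((List.ofFn fun i : Fin N => rotZ (θ j i) i).reverse.prod).mulVec w)
              (ketPlusAll (Fin N))))).foldl (fun w f => f w) v =
      ((List.ofFn fun j : Fin D =>
        (List.ofFn fun i : Fin N =>
          (T ^ ((L - (((j : ℕ) + 1) % L) + 1) % L) * op1 Zg i *
              (T ^ ((L - (((j : ℕ) + 1) % L) + 1) % L))ᴴ) ^ (m j i : ℕ) *
          NormedSpace.exp (((θ j i : ℂ) * Complex.I) •
            (T ^ ((L - (((j : ℕ) + 1) % L) + 1) % L) * op1 Zg i *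
              (T ^ ((L - (((j : ℕ) + 1) % L) + 1) % L))ᴴ))).reverse.prod).reverse.prod).mulVec
        v := by
  simp only [unitCell_eq_mul_zPow, mulVec_mulVec, foldl_ofFn_mulVec,
    list_prod_reverse_ofFn_unitary_conj_pow_mul_exp (pow_mem hT _)]
  simp only [← rotZ.eq_1, list_prod_reverse_ofFn_Z_pow_mul_rotZ, ← star_eq_conjTranspose,
    pow_sub_mod_add_one_mod_eq_star_pow hT hL hTL, star_star]
  rw [list_prod_reverse_ofFn_star_pow_conj hT]
  obtain ⟨c, rfl⟩ := hD
  rw [pow_mul, hTL, one_pow, star_one, one_mul]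
  simp only [mul_assoc]

end QCA

end
end
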